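/- arXiv:1303.3737 — 4 statements merged into one kernel-verified Lean document; each statement's English description precedes it below -/
import Mathlib

section
/- Let C ⊆ F2^n be a linear t-error-correcting code with information set I = {1,…,k} and parity check matrix H = (Aᵀ | Id) in standard form (so generator matrix G = (Id | A)). If y = x + e with x ∈ C and wt(e) ≤ t, then wt(H yᵀ) = wt(H eᵀ) ≤ t if and only if wt(e_I) = 0. -/
/-!
Given any word `e`, re-encode its information part `e_I` systematically: the word
`c = (e_I, -Aᵀ e_I)` is a codeword, and `e - c = (0, H e)`, so `c` lies at distance exactly
`wt(H e)` from `e`. If both `wt(e)` and `wt(H e)` are at most `t`, then `c` is a codeword of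
weight at most `2t`, hence `c = 0` and `e_I = c_I = 0`. Conversely, if `e_I = 0` then `H e` is
the tail of `e`, of weight at most `wt(e) ≤ t`. Since `H y = H x + H e = H e`, this is the claim.
-/

open Matrix

theorem hammingNorm_eq_castAdd_add_natAdd {β : Type*} [Zero β] [DecidableEq β] {k m : ℕ}
    (v : Fin (k + m) → β) :
    hammingNorm v =
      hammingNorm (fun j => v (Fin.castAdd m j)) + hammingNorm (fun i => v (Fin.natAdd k i)) := by
  simp only [hammingNorm, Finset.card_filter, Fin.sum_univ_add]

theorem hammingNorm_addCases_zero_left {β : Type*} [Zero β] [DecidableEq β] {k m : ℕ}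
    (w : Fin m → β) :
    hammingNorm (Fin.addCases (motive := fun _ => β) (0 : Fin k → β) w) = hammingNorm w := by
  rw [hammingNorm_eq_castAdd_add_natAdd]
  simp only [Fin.addCases_left, Fin.addCases_right, hammingNorm_zero, zero_add]

section SystematicCode

variable {R : Type*} [Ring R] {k m : ℕ}

def parityCheck (A : Matrix (Fin k) (Fin m) R) : Matrix (Fin m) (Fin (k + m)) R :=
  Matrix.of fun i => Fin.addCases (fun j => A j i) (fun j => if j = i then 1 else 0)

/-- Encoding with generator matrix `(Id | -A)`, which over `ZMod 2` is `G = (Id | A)`. -/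
def systematicEncode (A : Matrix (Fin k) (Fin m) R) (u : Fin k → R) : Fin (k + m) → R :=
  Fin.addCases u (-(Aᵀ *ᵥ u))

theorem parityCheck_mulVec (A : Matrix (Fin k) (Fin m) R) (v : Fin (k + m) → R) :
    parityCheck A *ᵥ v = Aᵀ *ᵥ (fun j => v (Fin.castAdd m j)) + fun i => v (Fin.natAdd k i) := by
  funext i
  simp [parityCheck, Matrix.mulVec, dotProduct, Fin.sum_univ_add, ite_mul]

theorem parityCheck_mulVec_systematicEncode (A : Matrix (Fin k) (Fin m) R) (u : Fin k → R) :
    parityCheck A *ᵥ systematicEncode A u = 0 := by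
  ext i
  simp [parityCheck_mulVec, systematicEncode]

theorem sub_systematicEncode (A : Matrix (Fin k) (Fin m) R) (v : Fin (k + m) → R) :
    v - systematicEncode A (fun j => v (Fin.castAdd m j)) =
      Fin.addCases (motive := fun _ => R) 0 (parityCheck A *ᵥ v) := by
  funext p
  induction p using Fin.addCases with
  | left j => simp [systematicEncode]
  | right i => simp [systematicEncode, parityCheck_mulVec, add_comm]

variable [DecidableEq R]

theorem hammingDist_systematicEncode (A : Matrix (Fin k) (Fin m) R) (v : Fin (k + m) → R) :
    hammingDist v (systematicEncode A (fun j => v (Fin.castAdd m j))) =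
      hammingNorm (parityCheck A *ᵥ v) := by
  rw [hammingDist_comm, hammingDist_eq_hammingNorm, neg_add_eq_sub, sub_systematicEncode, hammingNorm_addCases_zero_left]

theorem hammingNorm_parityCheck_mulVec_le (A : Matrix (Fin k) (Fin m) R) {v : Fin (k + m) → R}
    (hv : ∀ j, v (Fin.castAdd m j) = 0) :
    hammingNorm (parityCheck A *ᵥ v) ≤ hammingNorm v := by
  have hinfo : (fun j => v (Fin.castAdd m j)) = 0 := funext hv
  rw [parityCheck_mulVec, hinfo, Matrix.mulVec_zero, zero_add,
    hammingNorm_eq_castAdd_add_natAdd v]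
  exact Nat.le_add_left _ _

theorem info_eq_zero_of_hammingNorm_parityCheck_mulVec_le {A : Matrix (Fin k) (Fin m) R} {t : ℕ}
    (hwt : ∀ c, parityCheck A *ᵥ c = 0 → c ≠ 0 → 2 * t < hammingNorm c)
    {e : Fin (k + m) → R} (he : hammingNorm e ≤ t) (hHe : hammingNorm (parityCheck A *ᵥ e) ≤ t)
    (j : Fin k) : e (Fin.castAdd m j) = 0 := by
  set c := systematicEncode A (fun j => e (Fin.castAdd m j))
  have hc : c = 0 := by
    by_contra hne
    have hclose : hammingNorm c ≤ 2 * t := by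
      calc hammingNorm c = hammingDist c 0 := (hammingDist_zero_right c).symm
        _ ≤ hammingDist c e + hammingDist e 0 := hammingDist_triangle _ _ _
        _ = hammingNorm (parityCheck A *ᵥ e) + hammingNorm e := by
          rw [hammingDist_comm, hammingDist_systematicEncode, hammingDist_zero_right]
        _ ≤ 2 * t := by omega
    exact (hwt c (parityCheck_mulVec_systematicEncode A _) hne).not_ge hclose
  simpa [c, systematicEncode] using congrFun hc (Fin.castAdd m j)

end SystematicCode

/-- Let `C` be the binary linear `[k+m, k]` code with generator matrix
`G = (Id | A)` and parity check matrix `H = (Aᵀ | Id)`, i.e.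
`C = {x : H·x = 0}`, with information set `I = {1,…,k}` (the first `k`
coordinates).  Suppose `C` is `t`-error-correcting (distinct codewords at
Hamming distance greater than `2t`).  If `y = x + e` with `x ∈ C` and
`wt(e) ≤ t`, then `wt(H yᵀ) = wt(H eᵀ)` and this common value is `≤ t` if and
only if `wt(e_I) = 0`. -/
theorem syndrome_weight_iff_info_correct
    (k m t : ℕ) (A : Matrix (Fin k) (Fin m) (ZMod 2)) :
    let H : Matrix (Fin m) (Fin (k + m)) (ZMod 2) :=
      Matrix.of fun i => Fin.addCases (fun j => A j i) (fun j => if j = i then 1 else 0)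
    let C : Set (Fin (k + m) → ZMod 2) := {x | H.mulVec x = 0}
    ∀ (hdist : ∀ c₁ ∈ C, ∀ c₂ ∈ C, c₁ ≠ c₂ → 2 * t < hammingDist c₁ c₂)
      (x e y : Fin (k + m) → ZMod 2), x ∈ C → hammingNorm e ≤ t → y = x + e →
      hammingNorm (H.mulVec y) = hammingNorm (H.mulVec e) ∧
        (hammingNorm (H.mulVec y) ≤ t ↔ ∀ j : Fin k, e (Fin.castAdd m j) = 0) := by
  intro H C hdist x e y hx he hy
  have hH : H = parityCheck A := rfl
  have hwt : ∀ c, parityCheck A *ᵥ c = 0 → c ≠ 0 → 2 * t < hammingNorm c := fun c hc hne => by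
    simpa using hdist c hc 0 (Matrix.mulVec_zero H) hne
  have hsyndrome : H *ᵥ y = H *ᵥ e := by
    rw [hy, Matrix.mulVec_add, show H *ᵥ x = 0 from hx, zero_add]
  rw [hsyndrome, hH]
  exact ⟨rfl, info_eq_zero_of_hammingNorm_parityCheck_mulVec_le hwt he,
    fun hinfo => (hammingNorm_parityCheck_mulVec_le A hinfo).trans he⟩
end

section
/- Let 𝒞 ⊆ Z2^α × Z4^β be a Z2Z4-additive code of type (α, β; γ, δ; κ) with generator matrix in standard form 𝒢 = [[I_κ, T_b, 2T_2, 0, 0], [0, 0, 2T_1, 2I_{γ−κ}, 0], [0, S_b, S_q, R, I_δ]]. Then the binary code C = Φ(𝒞) ⊆ F2^{α+2β} is systematic with information set J = J1 ∪ J2 ∪ J3, where J1 = {1,…,κ}, J2 = {φ1(α+β+κ−γ−δ+i) : 1 ≤ i ≤ γ−κ}, J3 = {φ1(α+β−δ+j), φ2(α+β−δ+j) : 1 ≤ j ≤ δ}, with φ1(α+i) = α+2i−1 and φ2(α+i) = α+2i. In particular |C_J| = 2^{γ+2δ} = |C|. -/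
/-- The ambient group Z2^α × Z4^β. -/
abbrev Vab (α β : ℕ) := (Fin α → ZMod 2) × (Fin β → ZMod 4)

/-- The Gray map φ : Z4 → Z2². -/
def gray (a : ZMod 4) : ZMod 2 × ZMod 2 :=
  if a = 0 then (0, 0) else if a = 1 then (0, 1) else if a = 2 then (1, 1) else (1, 0)

/-- The componentwise Gray map Φ : Z2^{n1} × Z4^{n2} → F2^{n1+2n2}. -/
def Phi (n1 n2 : ℕ) (u : Vab n1 n2) : Fin (n1 + 2 * n2) → ZMod 2 := fun i =>
  if h : (i : ℕ) < n1 then u.1 ⟨i, h⟩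
  else
    have hj : ((i : ℕ) - n1) / 2 < n2 := by have := i.isLt; omega
    if ((i : ℕ) - n1) % 2 = 0 then (gray (u.2 ⟨((i : ℕ) - n1) / 2, hj⟩)).1
    else (gray (u.2 ⟨((i : ℕ) - n1) / 2, hj⟩)).2

/-- The natural inclusion of Z2 = {0,1} into Z4. -/
def toZ4 (a : ZMod 2) : ZMod 4 := a.val

/-- Reduction mod 2 of Z4. -/
def toZ2 (a : ZMod 4) : ZMod 2 := a.val

def grayInv (x y : ZMod 2) : ZMod 4 :=
  if x = 0 then (if y = 0 then 0 else 1) else (if y = 0 then 3 else 2)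

lemma grayInv_gray : ∀ a : ZMod 4, grayInv (gray a).1 (gray a).2 = a := by decide
lemma gray_grayInv : ∀ x y : ZMod 2, gray (grayInv x y) = (x, y) := by decide
lemma gray_two_mul_add : ∀ (c : ZMod 2) (s : ZMod 4),
    (gray (2 * toZ4 c + s)).1 = (gray s).1 + c := by decide
lemma two_add : ∀ a b : ZMod 2, a + (b + a) = b := by decide

lemma append_left' {α : Type*} {m n : ℕ} (f : Fin m → α) (g : Fin n → α) (i : ℕ)
    (h : i < m + n) (h' : i < m) : Fin.append f g ⟨i, h⟩ = f ⟨i, h'⟩ := by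
  have : (⟨i, h⟩ : Fin (m + n)) = Fin.castAdd n ⟨i, h'⟩ := rfl
  rw [this, Fin.append_left]

lemma append_right' {α : Type*} {m n : ℕ} (f : Fin m → α) (g : Fin n → α) (i : ℕ)
    (h : i < m + n) (h' : m ≤ i) : Fin.append f g ⟨i, h⟩ = g ⟨i - m, by omega⟩ := by
  have : (⟨i, h⟩ : Fin (m + n)) = Fin.natAdd m ⟨i - m, by omega⟩ := by
    apply Fin.ext; simp; omega
  rw [this, Fin.append_right]

section

/- Parameters: α = κ + a2, γ = κ + g2, β = b1 + g2 + δ,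
   where b1 = β + κ - γ - δ. -/
variable (κ a2 g2 b1 δ : ℕ)
variable (Tb : Matrix (Fin κ) (Fin a2) (ZMod 2)) (Sb : Matrix (Fin δ) (Fin a2) (ZMod 2))
variable (T2 : Matrix (Fin κ) (Fin b1) (ZMod 4)) (T1 : Matrix (Fin g2) (Fin b1) (ZMod 4))
variable (Sq : Matrix (Fin δ) (Fin b1) (ZMod 4)) (R : Matrix (Fin δ) (Fin g2) (ZMod 4))

/-- The codeword of the Z2Z4-additive code with standard-form generator matrix
𝒢 = [[I_κ, T_b | 2T_2, 0, 0], [0, 0 | 2T_1, 2I_{γ-κ}, 0], [0, S_b | S_q, R, I_δ]]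
corresponding to the message (b, c, d) ∈ Z2^κ × Z2^{γ-κ} × Z4^δ. -/
def encodeStd (b : Fin κ → ZMod 2) (c : Fin g2 → ZMod 2) (d : Fin δ → ZMod 4) :
    Vab (κ + a2) (b1 + g2 + δ) :=
  (Fin.append b (fun i => ∑ j, b j * Tb j i + ∑ l, toZ2 (d l) * Sb l i),
   Fin.append
     (Fin.append
       (fun i => ∑ j, 2 * toZ4 (b j) * T2 j i + ∑ j, 2 * toZ4 (c j) * T1 j i
         + ∑ l, d l * Sq l i)
       (fun i => 2 * toZ4 (c i) + ∑ l, d l * R l i))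
     d)

/-- The standard information set J = J1 ∪ J2 ∪ J3 of binary coordinate
positions, as an injection Fin (γ + 2δ) → Fin (α + 2β):  J1 = {1,…,κ},
J2 = {φ1(α+β+κ-γ-δ+i) : 1 ≤ i ≤ γ-κ}, and J3 the 2δ binary coordinates of the
last δ quaternary coordinates. -/
def Jstd : Fin (κ + g2 + 2 * δ) → Fin ((κ + a2) + 2 * (b1 + g2 + δ)) := fun m =>
  ⟨if (m : ℕ) < κ then (m : ℕ)
   else if (m : ℕ) < κ + g2 then (κ + a2) + 2 * (b1 + ((m : ℕ) - κ))
   else (κ + a2) + 2 * (b1 + g2) + ((m : ℕ) - κ - g2),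
   by have := m.isLt; split_ifs <;> omega⟩


lemma key_b (b : Fin κ → ZMod 2) (c : Fin g2 → ZMod 2) (d : Fin δ → ZMod 4)
    (i : ℕ) (hi : i < κ) (h : i < κ + g2 + 2 * δ) :
    Phi _ _ (encodeStd κ a2 g2 b1 δ Tb Sb T2 T1 Sq R b c d)
      (Jstd κ a2 g2 b1 δ ⟨i, h⟩) = b ⟨i, hi⟩ := by
  have hJ : Jstd κ a2 g2 b1 δ ⟨i, h⟩ = ⟨i, by omega⟩ := by
    simp only [Jstd, Fin.val_mk]; rw [Fin.mk_eq_mk]; split_ifs <;> omega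
  rw [hJ]
  simp only [Phi, encodeStd]
  rw [dif_pos (show i < κ + a2 by omega)]
  rw [append_left' _ _ _ _ hi]

lemma key_c (b : Fin κ → ZMod 2) (c : Fin g2 → ZMod 2) (d : Fin δ → ZMod 4)
    (i : ℕ) (hi : i < g2) (h : κ + i < κ + g2 + 2 * δ) :
    Phi _ _ (encodeStd κ a2 g2 b1 δ Tb Sb T2 T1 Sq R b c d)
      (Jstd κ a2 g2 b1 δ ⟨κ + i, h⟩) =
      (gray (∑ l, d l * R l ⟨i, hi⟩)).1 + c ⟨i, hi⟩ := by
  have hJ : Jstd κ a2 g2 b1 δ ⟨κ + i, h⟩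
      = ⟨(κ + a2) + 2 * (b1 + i), by omega⟩ := by
    simp only [Jstd, Fin.val_mk]; rw [Fin.mk_eq_mk]; split_ifs <;> omega
  rw [hJ]
  simp only [Phi, encodeStd]
  rw [dif_neg (by omega)]
  have h3 : b1 + i < b1 + g2 + δ := by omega
  rw [if_pos (by omega : ((κ + a2) + 2 * (b1 + i) - (κ + a2)) % 2 = 0)]
  rw [show (⟨((κ + a2) + 2 * (b1 + i) - (κ + a2)) / 2, by omega⟩ :
      Fin (b1 + g2 + δ)) = ⟨b1 + i, h3⟩ from Fin.mk_eq_mk.mpr (by omega)]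
  rw [append_left' _ _ _ _ (by omega : b1 + i < b1 + g2)]
  rw [append_right' _ _ _ _ (by omega : b1 ≤ b1 + i)]
  rw [show (⟨b1 + i - b1, by omega⟩ : Fin g2) = ⟨i, hi⟩ from Fin.mk_eq_mk.mpr (by omega)]
  exact gray_two_mul_add (c ⟨i, hi⟩) _

lemma key_d (b : Fin κ → ZMod 2) (c : Fin g2 → ZMod 2) (d : Fin δ → ZMod 4)
    (j : ℕ) (hj : j < δ) (e : ℕ) (he : e < 2) (h : κ + g2 + 2 * j + e < κ + g2 + 2 * δ) :
    Phi _ _ (encodeStd κ a2 g2 b1 δ Tb Sb T2 T1 Sq R b c d)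
      (Jstd κ a2 g2 b1 δ ⟨κ + g2 + 2 * j + e, h⟩) =
      if e = 0 then (gray (d ⟨j, hj⟩)).1 else (gray (d ⟨j, hj⟩)).2 := by
  have hJ : Jstd κ a2 g2 b1 δ ⟨κ + g2 + 2 * j + e, h⟩
      = ⟨(κ + a2) + 2 * (b1 + g2) + (2 * j + e), by omega⟩ := by
    simp only [Jstd, Fin.val_mk]; rw [Fin.mk_eq_mk]; split_ifs <;> omega
  rw [hJ]
  simp only [Phi, encodeStd]
  rw [dif_neg (by omega)]
  have h3 : b1 + g2 + j < b1 + g2 + δ := by omega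
  rw [show (⟨((κ + a2) + 2 * (b1 + g2) + (2 * j + e) - (κ + a2)) / 2, by omega⟩ :
      Fin (b1 + g2 + δ)) = ⟨b1 + g2 + j, h3⟩ from Fin.mk_eq_mk.mpr (by omega)]
  rw [append_right' _ _ _ _ (by omega : b1 + g2 ≤ b1 + g2 + j)]
  rw [show (⟨b1 + g2 + j - (b1 + g2), by omega⟩ : Fin δ) = ⟨j, hj⟩ from
    Fin.mk_eq_mk.mpr (by omega)]
  have hmod : ((κ + a2) + 2 * (b1 + g2) + (2 * j + e) - (κ + a2)) % 2 = e % 2 := by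
    omega
  rw [hmod]
  rcases (by omega : e = 0 ∨ e = 1) with rfl | rfl <;> simp

/-- Any Z2Z4-linear code C = Φ(𝒞), where 𝒞 has a generator matrix in standard
form, is systematic with information set the standard set J: restriction to J
is a bijection from C onto F2^{γ+2δ}; in particular |C_J| = 2^{γ+2δ} = |C|. -/
theorem Z2Z4_systematic :
    let C : Set (Fin ((κ + a2) + 2 * (b1 + g2 + δ)) → ZMod 2) :=
      {w | ∃ b c d, w = Phi _ _ (encodeStd κ a2 g2 b1 δ Tb Sb T2 T1 Sq R b c d)}
    Set.BijOn (fun w (m : Fin (κ + g2 + 2 * δ)) => w (Jstd κ a2 g2 b1 δ m))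
        C Set.univ ∧
      C.ncard = 2 ^ (κ + g2 + 2 * δ) := by
  intro C
  have hinj : Set.InjOn
      (fun w (m : Fin (κ + g2 + 2 * δ)) => w (Jstd κ a2 g2 b1 δ m)) C := by
    rintro w1 ⟨b1', c1', d1', rfl⟩ w2 ⟨b2', c2', d2', rfl⟩ hw
    have hd : d1' = d2' := by
      funext j
      have h0a := key_d κ a2 g2 b1 δ Tb Sb T2 T1 Sq R b1' c1' d1' ↑j j.isLt 0
        (by omega) (by omega)
      have h1a := key_d κ a2 g2 b1 δ Tb Sb T2 T1 Sq R b1' c1' d1' ↑j j.isLt 1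
        (by omega) (by omega)
      have h0b := key_d κ a2 g2 b1 δ Tb Sb T2 T1 Sq R b2' c2' d2' ↑j j.isLt 0
        (by omega) (by omega)
      have h1b := key_d κ a2 g2 b1 δ Tb Sb T2 T1 Sq R b2' c2' d2' ↑j j.isLt 1
        (by omega) (by omega)
      have g0 : Phi _ _ (encodeStd κ a2 g2 b1 δ Tb Sb T2 T1 Sq R b1' c1' d1')
          (Jstd κ a2 g2 b1 δ ⟨κ + g2 + 2 * ↑j + 0, by omega⟩)
          = Phi _ _ (encodeStd κ a2 g2 b1 δ Tb Sb T2 T1 Sq R b2' c2' d2')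
          (Jstd κ a2 g2 b1 δ ⟨κ + g2 + 2 * ↑j + 0, by omega⟩) :=
        congrFun hw ⟨κ + g2 + 2 * ↑j + 0, by omega⟩
      have g1 : Phi _ _ (encodeStd κ a2 g2 b1 δ Tb Sb T2 T1 Sq R b1' c1' d1')
          (Jstd κ a2 g2 b1 δ ⟨κ + g2 + 2 * ↑j + 1, by omega⟩)
          = Phi _ _ (encodeStd κ a2 g2 b1 δ Tb Sb T2 T1 Sq R b2' c2' d2')
          (Jstd κ a2 g2 b1 δ ⟨κ + g2 + 2 * ↑j + 1, by omega⟩) :=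
        congrFun hw ⟨κ + g2 + 2 * ↑j + 1, by omega⟩
      have A := (h0a.symm.trans (g0.trans h0b))
      have B := (h1a.symm.trans (g1.trans h1b))
      norm_num at A B
      have hgi := congrArg₂ grayInv A B
      rw [grayInv_gray, grayInv_gray] at hgi
      exact hgi
    have hb : b1' = b2' := by
      funext i
      have h1 := key_b κ a2 g2 b1 δ Tb Sb T2 T1 Sq R b1' c1' d1' ↑i i.isLt (by omega)
      have h2 := key_b κ a2 g2 b1 δ Tb Sb T2 T1 Sq R b2' c2' d2' ↑i i.isLt (by omega)
      have g : Phi _ _ (encodeStd κ a2 g2 b1 δ Tb Sb T2 T1 Sq R b1' c1' d1')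
          (Jstd κ a2 g2 b1 δ ⟨↑i, by omega⟩)
          = Phi _ _ (encodeStd κ a2 g2 b1 δ Tb Sb T2 T1 Sq R b2' c2' d2')
          (Jstd κ a2 g2 b1 δ ⟨↑i, by omega⟩) := congrFun hw ⟨↑i, by omega⟩
      exact h1.symm.trans (g.trans h2)
    have hc : c1' = c2' := by
      funext i
      have h1 := key_c κ a2 g2 b1 δ Tb Sb T2 T1 Sq R b1' c1' d1' ↑i i.isLt (by omega)
      have h2 := key_c κ a2 g2 b1 δ Tb Sb T2 T1 Sq R b2' c2' d2' ↑i i.isLt (by omega)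
      have g : Phi _ _ (encodeStd κ a2 g2 b1 δ Tb Sb T2 T1 Sq R b1' c1' d1')
          (Jstd κ a2 g2 b1 δ ⟨κ + ↑i, by omega⟩)
          = Phi _ _ (encodeStd κ a2 g2 b1 δ Tb Sb T2 T1 Sq R b2' c2' d2')
          (Jstd κ a2 g2 b1 δ ⟨κ + ↑i, by omega⟩) := congrFun hw ⟨κ + ↑i, by omega⟩
      have A := h1.symm.trans (g.trans h2)
      rw [hd] at A
      have A' := add_left_cancel A
      exact A'
    rw [hb, hc, hd]
  have hsurj : Set.SurjOn
      (fun w (m : Fin (κ + g2 + 2 * δ)) => w (Jstd κ a2 g2 b1 δ m)) C Set.univ := by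
    intro x _
    refine ⟨Phi _ _ (encodeStd κ a2 g2 b1 δ Tb Sb T2 T1 Sq R
      (fun i => x ⟨(i : ℕ), by omega⟩)
      (fun i => x ⟨κ + (i : ℕ), by omega⟩ +
        (gray (∑ l, (fun j : Fin δ => grayInv (x ⟨κ + g2 + 2 * (j : ℕ), by omega⟩)
          (x ⟨κ + g2 + 2 * (j : ℕ) + 1, by omega⟩)) l * R l i)).1)
      (fun j : Fin δ => grayInv (x ⟨κ + g2 + 2 * (j : ℕ), by omega⟩)
        (x ⟨κ + g2 + 2 * (j : ℕ) + 1, by omega⟩))),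
      ⟨_, _, _, rfl⟩, ?_⟩
    funext m
    show Phi _ _ (encodeStd κ a2 g2 b1 δ Tb Sb T2 T1 Sq R _ _ _)
      (Jstd κ a2 g2 b1 δ m) = x m
    by_cases hm1 : (m : ℕ) < κ
    · exact key_b κ a2 g2 b1 δ Tb Sb T2 T1 Sq R _ _ _ ↑m hm1 (by omega)
    · by_cases hm2 : (m : ℕ) < κ + g2
      · have hm : m = ⟨κ + ((m : ℕ) - κ), by omega⟩ := Fin.ext (by simp; omega)
        rw [hm, key_c κ a2 g2 b1 δ Tb Sb T2 T1 Sq R _ _ _ ((m : ℕ) - κ)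
          (by omega) (by omega)]
        exact two_add _ _
      · obtain ⟨q, r, hq, hr2, hmv⟩ :
            ∃ q r, q < δ ∧ r < 2 ∧ (m : ℕ) = κ + g2 + 2 * q + r :=
          ⟨((m : ℕ) - κ - g2) / 2, ((m : ℕ) - κ - g2) % 2, by omega, by omega, by omega⟩
        have hm : m = ⟨κ + g2 + 2 * q + r, by omega⟩ := Fin.ext (by simp [hmv])
        rw [hm, key_d κ a2 g2 b1 δ Tb Sb T2 T1 Sq R _ _ _ q hq r hr2 (by omega)]
        rcases (by omega : r = 0 ∨ r = 1) with rfl | rfl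
        · rw [if_pos rfl]
          simp only [gray_grayInv]
          exact congrArg x (Fin.mk_eq_mk.mpr (by omega))
        · rw [if_neg (by omega)]
          simp only [gray_grayInv]
  refine ⟨⟨fun w _ => Set.mem_univ _, hinj, hsurj⟩, ?_⟩
  have himg : (fun w (m : Fin (κ + g2 + 2 * δ)) => w (Jstd κ a2 g2 b1 δ m)) '' C
      = Set.univ := Set.eq_univ_of_univ_subset hsurj
  calc C.ncard
      = ((fun w (m : Fin (κ + g2 + 2 * δ)) => w (Jstd κ a2 g2 b1 δ m)) '' C).ncard :=
        (Set.ncard_image_of_injOn hinj).symm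
    _ = (Set.univ : Set (Fin (κ + g2 + 2 * δ) → ZMod 2)).ncard := by rw [himg]
    _ = 2 ^ (κ + g2 + 2 * δ) := by simp [Set.ncard_univ, Nat.card_eq_fintype_card]

end
end

section
/- Let 𝒞 ⊆ Z2^α × Z4^β be a Z2Z4-additive code with generator matrix in standard form (2) whose row vectors of order two are {u_i}_{i=1}^{γ} and of order four are {v_j}_{j=1}^{δ}. Then the binary code C = Φ(𝒞) is linear (a subspace of F2^{α+2β}) if and only if 2 v_j ∗ v_k ∈ 𝒞 for all 1 ≤ j < k ≤ δ, where ∗ denotes the componentwise product. -/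
lemma toZ2_add : ∀ x y : ZMod 4, toZ2 (x+y) = toZ2 x + toZ2 y := by decide
lemma two_toZ4_add : ∀ x y : ZMod 2, 2 * toZ4 (x+y) = 2*toZ4 x + 2*toZ4 y := by decide
lemma toZ2_zero : toZ2 0 = 0 := rfl
lemma toZ4_zero : toZ4 0 = 0 := rfl
lemma gray_add : ∀ a b : ZMod 4, gray (a + b + 2*(a*b)) = gray a + gray b := by decide
lemma gray_inj : ∀ a b : ZMod 4, (gray a).1 = (gray b).1 → (gray a).2 = (gray b).2 → a = b := by decide

def twoStar {α β : ℕ} (u v : Vab α β) : Vab α β := (0, 2 * (u.2 * v.2))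

lemma twoStar_comm {α β : ℕ} (u v : Vab α β) : twoStar u v = twoStar v u := by
  simp [twoStar, mul_comm]

lemma twoStar_apply2 {α β : ℕ} (u v : Vab α β) (j : Fin β) :
    (twoStar u v).2 j = 2 * (u.2 j * v.2 j) := rfl

lemma twoStar_add_left {α β : ℕ} (u u' v : Vab α β) :
    twoStar (u + u') v = twoStar u v + twoStar u' v := by
  simp only [twoStar, Prod.mk_add_mk, Prod.ext_iff]
  constructor
  · simp
  · funext j; simp [Pi.add_apply, Pi.mul_apply]; ring

lemma Phi_add {n1 n2 : ℕ} (u v : Vab n1 n2) :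
    Phi n1 n2 u + Phi n1 n2 v = Phi n1 n2 (u + v + twoStar u v) := by
  funext i
  simp only [Pi.add_apply, Phi]
  split
  · simp [twoStar]
  · have h2 : ∀ j, (u + v + twoStar u v).2 j = u.2 j + v.2 j + 2*(u.2 j * v.2 j) := by
      intro j; simp [twoStar]
    rw [h2, gray_add]
    split <;> simp


lemma Phi_at_even {n1 n2 : ℕ} (w : Vab n1 n2) (j : Fin n2) (h : n1 + 2*(j:ℕ) < n1 + 2*n2) :
    Phi n1 n2 w ⟨n1 + 2*(j:ℕ), h⟩ = (gray (w.2 j)).1 := by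
  have hn0 : ¬ (n1 + 2*(j:ℕ) < n1) := by omega
  have hd0 : (n1 + 2*(j:ℕ) - n1) % 2 = 0 := by omega
  have hj : (⟨(n1 + 2*(j:ℕ) - n1) / 2, by omega⟩ : Fin n2) = j := Fin.ext (show _ = (j:ℕ) by simp only [Fin.val_mk]; omega)
  simp only [Phi, dif_neg hn0, if_pos hd0]
  rw [hj]

lemma Phi_at_odd {n1 n2 : ℕ} (w : Vab n1 n2) (j : Fin n2) (h : n1 + 2*(j:ℕ) + 1 < n1 + 2*n2) :
    Phi n1 n2 w ⟨n1 + 2*(j:ℕ) + 1, h⟩ = (gray (w.2 j)).2 := by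
  have hn0 : ¬ (n1 + 2*(j:ℕ) + 1 < n1) := by omega
  have hd0 : ¬ ((n1 + 2*(j:ℕ) + 1 - n1) % 2 = 0) := by omega
  have hj : (⟨(n1 + 2*(j:ℕ) + 1 - n1) / 2, by omega⟩ : Fin n2) = j := Fin.ext (show _ = (j:ℕ) by simp only [Fin.val_mk]; omega)
  simp only [Phi, dif_neg hn0, if_neg hd0]
  rw [hj]

lemma Phi_inj {n1 n2 : ℕ} : Function.Injective (Phi n1 n2) := by
  intro u v h
  have hb : u.1 = v.1 := by
    funext i
    have hi : (i:ℕ) < n1 + 2*n2 := by omega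
    have := congrFun h ⟨i, hi⟩
    simpa [Phi, i.isLt] using this
  have hq : u.2 = v.2 := by
    funext j
    have h0 : n1 + 2*(j:ℕ) < n1 + 2*n2 := by have := j.isLt; omega
    have h1 : n1 + 2*(j:ℕ) + 1 < n1 + 2*n2 := by have := j.isLt; omega
    have e0 := congrFun h ⟨n1 + 2*(j:ℕ), h0⟩
    have e1 := congrFun h ⟨n1 + 2*(j:ℕ) + 1, h1⟩
    rw [Phi_at_even u j h0, Phi_at_even v j h0] at e0
    rw [Phi_at_odd u j h1, Phi_at_odd v j h1] at e1
    exact gray_inj _ _ e0 e1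
  exact Prod.ext hb hq


lemma append_add {m n : ℕ} {M : Type*} [AddMonoid M] (f f' : Fin m → M) (g g' : Fin n → M) :
    Fin.append f g + Fin.append f' g' = Fin.append (f + f') (g + g') := by
  funext i
  refine Fin.addCases (fun i => ?_) (fun i => ?_) i <;>
    simp [Fin.append_left, Fin.append_right]



section

/- Parameters: α = κ + a2, γ = κ + g2, β = b1 + g2 + δ,
   where b1 = β + κ - γ - δ. -/
variable (κ a2 g2 b1 δ : ℕ)
variable (Tb : Matrix (Fin κ) (Fin a2) (ZMod 2)) (Sb : Matrix (Fin δ) (Fin a2) (ZMod 2))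
variable (T2 : Matrix (Fin κ) (Fin b1) (ZMod 4)) (T1 : Matrix (Fin g2) (Fin b1) (ZMod 4))
variable (Sq : Matrix (Fin δ) (Fin b1) (ZMod 4)) (R : Matrix (Fin δ) (Fin g2) (ZMod 4))

/-- The componentwise product on Z2^α × Z4^β. -/
def star {α β : ℕ} (u v : Vab α β) : Vab α β := (u.1 * v.1, u.2 * v.2)

/-- The order-four rows of the standard-form generator matrix, i.e. the rows
v_j = (0, S_b | S_q, R, I_δ) of 𝒢. -/
def rowFour (l : Fin δ) : Vab (κ + a2) (b1 + g2 + δ) :=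
  encodeStd κ a2 g2 b1 δ Tb Sb T2 T1 Sq R 0 0 (Pi.single l 1)

lemma encode_add (b b' : Fin κ → ZMod 2) (c c' : Fin g2 → ZMod 2) (d d' : Fin δ → ZMod 4) :
    encodeStd κ a2 g2 b1 δ Tb Sb T2 T1 Sq R b c d + encodeStd κ a2 g2 b1 δ Tb Sb T2 T1 Sq R b' c' d'
      = encodeStd κ a2 g2 b1 δ Tb Sb T2 T1 Sq R (b + b') (c + c') (d + d') := by
  unfold encodeStd
  refine Prod.ext ?_ ?_
  · show _ + _ = _
    rw [append_add]
    funext i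
    refine Fin.addCases (fun i => ?_) (fun i => ?_) i <;>
      simp only [Fin.append_left, Fin.append_right, Pi.add_apply, toZ2_add, two_toZ4_add,
        add_mul, Finset.sum_add_distrib] <;> ring
  · show _ + _ = _
    rw [append_add, append_add]
    funext i
    refine Fin.addCases (fun i => ?_) (fun i => ?_) i
    · refine Fin.addCases (fun i => ?_) (fun i => ?_) i <;>
        simp only [Fin.append_left, Fin.append_right, Pi.add_apply, toZ2_add, two_toZ4_add,
          add_mul, Finset.sum_add_distrib] <;> ring
    · simp [Fin.append_right]

lemma encode_zero : encodeStd κ a2 g2 b1 δ Tb Sb T2 T1 Sq R 0 0 0 = 0 := by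
  unfold encodeStd
  refine Prod.ext ?_ ?_ <;> funext i <;>
  · refine Fin.addCases (fun i => ?_) (fun i => ?_) i <;>
      first
      | (refine Fin.addCases (fun i => ?_) (fun i => ?_) i <;>
          simp [Fin.append_left, Fin.append_right, toZ2_zero, toZ4_zero])
      | simp [Fin.append_left, Fin.append_right, toZ2_zero, toZ4_zero]

lemma two_mul_enc_bc0 (b : Fin κ → ZMod 2) (c : Fin g2 → ZMod 2) (j : Fin (b1 + g2 + δ)) :
    2 * (encodeStd κ a2 g2 b1 δ Tb Sb T2 T1 Sq R b c 0).2 j = 0 := by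
  have h4 : ∀ x : ZMod 4, 2 * (2 * x) = 0 := by decide
  unfold encodeStd
  refine Fin.addCases (fun j => ?_) (fun j => ?_) j
  · refine Fin.addCases (fun j => ?_) (fun j => ?_) j <;>
      simp [Fin.append_left, Fin.append_right, Finset.mul_sum, mul_add, h4, mul_assoc]
  · simp [Fin.append_right]

lemma enc2_linear (d : Fin δ → ZMod 4) (j : Fin (b1 + g2 + δ)) :
    (encodeStd κ a2 g2 b1 δ Tb Sb T2 T1 Sq R 0 0 d).2 j
      = ∑ l, d l * (encodeStd κ a2 g2 b1 δ Tb Sb T2 T1 Sq R 0 0 (Pi.single l 1)).2 j := by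
  unfold encodeStd
  refine Fin.addCases (fun j => ?_) (fun j => ?_) j
  · refine Fin.addCases (fun j => ?_) (fun j => ?_) j <;>
      simp [Fin.append_left, Fin.append_right, toZ4_zero, Finset.mul_sum, Pi.single_apply,
        Finset.sum_ite_eq, mul_ite, mul_comm]
  · simp [Fin.append_right, Pi.single_apply, Finset.sum_ite_eq, mul_comm]

/-- membership predicate for the code -/
def memC (w : Vab (κ + a2) (b1 + g2 + δ)) : Prop :=
  ∃ b c d, w = encodeStd κ a2 g2 b1 δ Tb Sb T2 T1 Sq R b c d

lemma memC_zero : memC κ a2 g2 b1 δ Tb Sb T2 T1 Sq R 0 :=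
  ⟨0, 0, 0, (encode_zero κ a2 g2 b1 δ Tb Sb T2 T1 Sq R).symm⟩

lemma memC_add {u v : Vab (κ + a2) (b1 + g2 + δ)}
    (hu : memC κ a2 g2 b1 δ Tb Sb T2 T1 Sq R u) (hv : memC κ a2 g2 b1 δ Tb Sb T2 T1 Sq R v) :
    memC κ a2 g2 b1 δ Tb Sb T2 T1 Sq R (u + v) := by
  obtain ⟨b, c, d, rfl⟩ := hu
  obtain ⟨b', c', d', rfl⟩ := hv
  rw [encode_add κ a2 g2 b1 δ Tb Sb T2 T1 Sq R b b' c c' d d']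
  exact ⟨_, _, _, rfl⟩

lemma memC_sum {ι : Type*} (s : Finset ι) (F : ι → Vab (κ + a2) (b1 + g2 + δ))
    (h : ∀ i ∈ s, memC κ a2 g2 b1 δ Tb Sb T2 T1 Sq R (F i)) :
    memC κ a2 g2 b1 δ Tb Sb T2 T1 Sq R (∑ i ∈ s, F i) :=
  Finset.sum_induction F _ (fun _ _ => memC_add κ a2 g2 b1 δ Tb Sb T2 T1 Sq R)
    (memC_zero κ a2 g2 b1 δ Tb Sb T2 T1 Sq R) h

lemma twoStar_bc0 (b : Fin κ → ZMod 2) (c : Fin g2 → ZMod 2)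
    (v : Vab (κ + a2) (b1 + g2 + δ)) :
    twoStar (encodeStd κ a2 g2 b1 δ Tb Sb T2 T1 Sq R b c 0) v = 0 := by
  refine Prod.ext rfl ?_
  funext j
  show 2 * ((encodeStd κ a2 g2 b1 δ Tb Sb T2 T1 Sq R b c 0).2 j * v.2 j) = 0
  rw [show ∀ x y : ZMod 4, 2 * (x * y) = (2 * x) * y from fun x y => by ring,
    two_mul_enc_bc0, zero_mul]

lemma twoStar_self {α β : ℕ} (w : Vab α β) : twoStar w w = w + w := by
  refine Prod.ext ?_ ?_
  · funext i
    exact (show ∀ x : ZMod 2, (0:ZMod 2) = x + x by decide) _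
  · funext j
    exact (show ∀ x : ZMod 4, 2*(x*x) = x + x by decide) _

lemma scal_twoStar (c : ZMod 4) (u v : Vab (κ + a2) (b1 + g2 + δ))
    (h : memC κ a2 g2 b1 δ Tb Sb T2 T1 Sq R (twoStar u v)) :
    memC κ a2 g2 b1 δ Tb Sb T2 T1 Sq R (0, fun j => c * (twoStar u v).2 j) := by
  have key : ∀ c x y : ZMod 4, c * (2 * (x*y)) = if c = 1 ∨ c = 3 then 2*(x*y) else 0 := by decide
  by_cases hc : c = 1 ∨ c = 3
  · have : ((0 : Fin (κ+a2) → ZMod 2), fun j => c * (twoStar u v).2 j) = twoStar u v := by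
      refine Prod.ext rfl ?_
      funext j
      show c * (2 * (u.2 j * v.2 j)) = 2 * (u.2 j * v.2 j)
      rw [key, if_pos hc]
    rw [this]; exact h
  · have : ((0 : Fin (κ+a2) → ZMod 2), fun j => c * (twoStar u v).2 j)
        = (0 : Vab (κ+a2) (b1+g2+δ)) := by
      refine Prod.ext rfl ?_
      funext j
      show c * (2 * (u.2 j * v.2 j)) = (0:ZMod 4)
      rw [key, if_neg hc]
    rw [this]; exact memC_zero κ a2 g2 b1 δ Tb Sb T2 T1 Sq R

lemma twoStar_dd (d d' : Fin δ → ZMod 4) :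
    twoStar (encodeStd κ a2 g2 b1 δ Tb Sb T2 T1 Sq R 0 0 d)
        (encodeStd κ a2 g2 b1 δ Tb Sb T2 T1 Sq R 0 0 d')
      = ∑ l, ∑ k, ((0 : Fin (κ+a2) → ZMod 2),
          fun j => (d l * d' k) * (twoStar (rowFour κ a2 g2 b1 δ Tb Sb T2 T1 Sq R l)
            (rowFour κ a2 g2 b1 δ Tb Sb T2 T1 Sq R k)).2 j) := by
  refine Prod.ext ?_ ?_
  · simp [twoStar, Prod.fst_sum]
  · funext j
    rw [Prod.snd_sum, Finset.sum_apply]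
    show 2 * ((encodeStd κ a2 g2 b1 δ Tb Sb T2 T1 Sq R 0 0 d).2 j
      * (encodeStd κ a2 g2 b1 δ Tb Sb T2 T1 Sq R 0 0 d').2 j) = _
    rw [enc2_linear, enc2_linear, Finset.sum_mul_sum, Finset.mul_sum]
    refine Finset.sum_congr rfl fun l _ => ?_
    rw [Prod.snd_sum, Finset.sum_apply, Finset.mul_sum]
    refine Finset.sum_congr rfl fun k _ => ?_
    show _ = (d l * d' k) * (twoStar (rowFour κ a2 g2 b1 δ Tb Sb T2 T1 Sq R l)
            (rowFour κ a2 g2 b1 δ Tb Sb T2 T1 Sq R k)).2 j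
    rw [twoStar_apply2]
    show 2 * ((d l * (encodeStd κ a2 g2 b1 δ Tb Sb T2 T1 Sq R 0 0 (Pi.single l 1)).2 j)
        * (d' k * (encodeStd κ a2 g2 b1 δ Tb Sb T2 T1 Sq R 0 0 (Pi.single k 1)).2 j)) = _
    show _ = (d l * d' k) * (2 * ((encodeStd κ a2 g2 b1 δ Tb Sb T2 T1 Sq R 0 0 (Pi.single l 1)).2 j
        * (encodeStd κ a2 g2 b1 δ Tb Sb T2 T1 Sq R 0 0 (Pi.single k 1)).2 j))
    ring

lemma twoStar_eq_smul {α β : ℕ} (u v : Vab α β) : (2:ℕ) • star u v = twoStar u v := by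
  refine Prod.ext ?_ ?_
  · funext i
    exact (show ∀ x : ZMod 2, (2:ℕ) • x = 0 by decide) _
  · funext j
    exact (show ∀ x : ZMod 4, (2:ℕ) • x = 2 * x by decide) _

lemma four_add {α β : ℕ} (w : Vab α β) : w + w + w + w = 0 := by
  refine Prod.ext ?_ ?_
  · funext i
    exact (show ∀ x : ZMod 2, x + x + x + x = 0 by decide) _
  · funext j
    exact (show ∀ x : ZMod 4, x + x + x + x = 0 by decide) _

lemma twoStar_add_right {α β : ℕ} (u v v' : Vab α β) :
    twoStar u (v + v') = twoStar u v + twoStar u v' := by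
  rw [twoStar_comm, twoStar_add_left, twoStar_comm v u, twoStar_comm v' u]

lemma enc_decomp (b : Fin κ → ZMod 2) (c : Fin g2 → ZMod 2) (d : Fin δ → ZMod 4) :
    encodeStd κ a2 g2 b1 δ Tb Sb T2 T1 Sq R b c d
      = encodeStd κ a2 g2 b1 δ Tb Sb T2 T1 Sq R b c 0
        + encodeStd κ a2 g2 b1 δ Tb Sb T2 T1 Sq R 0 0 d := by
  rw [encode_add]
  simp

lemma twoStar_row_mem
    (H : ∀ l k : Fin δ, l < k → memC κ a2 g2 b1 δ Tb Sb T2 T1 Sq R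
        (twoStar (rowFour κ a2 g2 b1 δ Tb Sb T2 T1 Sq R l) (rowFour κ a2 g2 b1 δ Tb Sb T2 T1 Sq R k)))
    (l k : Fin δ) :
    memC κ a2 g2 b1 δ Tb Sb T2 T1 Sq R
      (twoStar (rowFour κ a2 g2 b1 δ Tb Sb T2 T1 Sq R l) (rowFour κ a2 g2 b1 δ Tb Sb T2 T1 Sq R k)) := by
  rcases lt_trichotomy l k with h | h | h
  · exact H l k h
  · subst h
    rw [twoStar_self]
    exact memC_add κ a2 g2 b1 δ Tb Sb T2 T1 Sq R ⟨0, 0, _, rfl⟩ ⟨0, 0, _, rfl⟩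
  · rw [twoStar_comm]
    exact H k l h

lemma twoStar_mem
    (H : ∀ l k : Fin δ, l < k → memC κ a2 g2 b1 δ Tb Sb T2 T1 Sq R
        (twoStar (rowFour κ a2 g2 b1 δ Tb Sb T2 T1 Sq R l) (rowFour κ a2 g2 b1 δ Tb Sb T2 T1 Sq R k)))
    (b b' : Fin κ → ZMod 2) (c c' : Fin g2 → ZMod 2) (d d' : Fin δ → ZMod 4) :
    memC κ a2 g2 b1 δ Tb Sb T2 T1 Sq R
      (twoStar (encodeStd κ a2 g2 b1 δ Tb Sb T2 T1 Sq R b c d)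
        (encodeStd κ a2 g2 b1 δ Tb Sb T2 T1 Sq R b' c' d')) := by
  rw [enc_decomp κ a2 g2 b1 δ Tb Sb T2 T1 Sq R b c d,
    enc_decomp κ a2 g2 b1 δ Tb Sb T2 T1 Sq R b' c' d',
    twoStar_add_left, twoStar_add_right, twoStar_add_right,
    twoStar_bc0, twoStar_bc0, twoStar_comm _ (encodeStd κ a2 g2 b1 δ Tb Sb T2 T1 Sq R b' c' 0),
    twoStar_bc0]
  simp only [zero_add, add_zero]
  rw [twoStar_dd]
  refine memC_sum κ a2 g2 b1 δ Tb Sb T2 T1 Sq R _ _ fun l _ => ?_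
  refine memC_sum κ a2 g2 b1 δ Tb Sb T2 T1 Sq R _ _ fun k _ => ?_
  exact scal_twoStar κ a2 g2 b1 δ Tb Sb T2 T1 Sq R _ _ _
    (twoStar_row_mem κ a2 g2 b1 δ Tb Sb T2 T1 Sq R H l k)


/-- Let 𝒞 be the Z2Z4-additive code with standard-form generator matrix 𝒢,
with order-four rows v_1, …, v_δ.  The binary Gray image C = Φ(𝒞) is linear
(closed under addition) if and only if 2·(v_j ∗ v_k) ∈ 𝒞 for all j < k, where
∗ is the componentwise product. -/
theorem gray_image_linear_iff :
    let 𝒞 : Set (Vab (κ + a2) (b1 + g2 + δ)) :=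
      {p | ∃ b c d, p = encodeStd κ a2 g2 b1 δ Tb Sb T2 T1 Sq R b c d}
    let C : Set (Fin ((κ + a2) + 2 * (b1 + g2 + δ)) → ZMod 2) := Phi _ _ '' 𝒞
    ((∀ x ∈ C, ∀ y ∈ C, x + y ∈ C) ↔
      ∀ l k : Fin δ, l < k →
        (2 : ℕ) • star (rowFour κ a2 g2 b1 δ Tb Sb T2 T1 Sq R l)
          (rowFour κ a2 g2 b1 δ Tb Sb T2 T1 Sq R k) ∈ 𝒞) := by
  intro 𝒞 C
  have hmem : ∀ w, w ∈ 𝒞 ↔ memC κ a2 g2 b1 δ Tb Sb T2 T1 Sq R w := fun w => Iff.rfl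
  constructor
  · intro hC l k hlk
    set u := rowFour κ a2 g2 b1 δ Tb Sb T2 T1 Sq R l with hu
    set v := rowFour κ a2 g2 b1 δ Tb Sb T2 T1 Sq R k with hv
    have hu𝒞 : u ∈ 𝒞 := ⟨0, 0, _, rfl⟩
    have hv𝒞 : v ∈ 𝒞 := ⟨0, 0, _, rfl⟩
    have h1 : Phi _ _ u + Phi _ _ v ∈ C := hC _ ⟨u, hu𝒞, rfl⟩ _ ⟨v, hv𝒞, rfl⟩
    obtain ⟨y, hy𝒞, hy⟩ := h1
    rw [Phi_add] at hy
    have hyeq : y = u + v + twoStar u v := Phi_inj hy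
    rw [twoStar_eq_smul]
    have key : twoStar u v
        = (u + v + twoStar u v) + (u + u + u) + (v + v + v) := by
      have h4u := four_add u
      have h4v := four_add v
      have : (u + v + twoStar u v) + (u + u + u) + (v + v + v)
          = twoStar u v + (u + u + u + u) + (v + v + v + v) := by abel
      rw [this, h4u, h4v, add_zero, add_zero]
    rw [key, ← hyeq]
    exact (hmem _).2 (memC_add κ a2 g2 b1 δ Tb Sb T2 T1 Sq R
      (memC_add κ a2 g2 b1 δ Tb Sb T2 T1 Sq R ((hmem _).1 hy𝒞)
        (memC_add κ a2 g2 b1 δ Tb Sb T2 T1 Sq R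
          (memC_add κ a2 g2 b1 δ Tb Sb T2 T1 Sq R ((hmem _).1 hu𝒞) ((hmem _).1 hu𝒞))
          ((hmem _).1 hu𝒞)))
      (memC_add κ a2 g2 b1 δ Tb Sb T2 T1 Sq R
        (memC_add κ a2 g2 b1 δ Tb Sb T2 T1 Sq R ((hmem _).1 hv𝒞) ((hmem _).1 hv𝒞))
        ((hmem _).1 hv𝒞)))
  · intro H x hx y hy
    obtain ⟨u, ⟨b, c, d, rfl⟩, rfl⟩ := hx
    obtain ⟨v, ⟨b', c', d', rfl⟩, rfl⟩ := hy
    rw [Phi_add]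
    have H' : ∀ l k : Fin δ, l < k → memC κ a2 g2 b1 δ Tb Sb T2 T1 Sq R
        (twoStar (rowFour κ a2 g2 b1 δ Tb Sb T2 T1 Sq R l)
          (rowFour κ a2 g2 b1 δ Tb Sb T2 T1 Sq R k)) := by
      intro l k hlk
      have := H l k hlk
      rwa [twoStar_eq_smul] at this
    refine ⟨_, ?_, rfl⟩
    exact (hmem _).2 (memC_add κ a2 g2 b1 δ Tb Sb T2 T1 Sq R
      (memC_add κ a2 g2 b1 δ Tb Sb T2 T1 Sq R ⟨_, _, _, rfl⟩ ⟨_, _, _, rfl⟩)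
      (twoStar_mem κ a2 g2 b1 δ Tb Sb T2 T1 Sq R H' b b' c c' d d'))


end
end

section
/- Let 𝒞 be a t-error-correcting Z2Z4-additive code of type (α,β;γ,δ;κ) with γ = κ, parity check matrix ℋ in the form (5), and let C = Φ(𝒞) with standard information set J. If y = x + e ∈ F2^{α+2β} with x ∈ C and wt(e) ≤ t, then wt_L(ℋ Φ^{-1}(y)ᵀ) ≤ t if and only if wt(e_J) = 0. -/
section

/- Parameters: γ = κ, α = κ + a2, β = b1 + δ. -/
variable (κ a2 b1 δ : ℕ)
variable (Tb : Matrix (Fin κ) (Fin a2) (ZMod 2)) (Sb : Matrix (Fin δ) (Fin a2) (ZMod 2))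
variable (T2 : Matrix (Fin κ) (Fin b1) (ZMod 4)) (Sq : Matrix (Fin δ) (Fin b1) (ZMod 4))

/-- The codeword of the Z2Z4-additive code (case γ = κ) with generator matrix
𝒢 = [[I_κ, T_b | 2T_2, 0], [0, S_b | S_q, I_δ]] corresponding to the message
(u, v) ∈ Z2^κ × Z4^δ; this is (u,v)·𝒢. -/
def encodeFree (u : Fin κ → ZMod 2) (v : Fin δ → ZMod 4) : Vab (κ + a2) (b1 + δ) :=
  (Fin.append u (fun i => ∑ j, u j * Tb j i + ∑ l, toZ2 (v l) * Sb l i),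
   Fin.append (fun i => ∑ j, 2 * toZ4 (u j) * T2 j i + ∑ l, v l * Sq l i) v)

/-- The information set I = {1,…,κ} ∪ {α+2(β−δ)+1,…,α+2β} in binary
coordinates, as an injection. -/
def Ifree : Fin (κ + 2 * δ) → Fin ((κ + a2) + 2 * (b1 + δ)) := fun m =>
  ⟨if (m : ℕ) < κ then (m : ℕ) else (κ + a2) + 2 * b1 + ((m : ℕ) - κ),
   by have := m.isLt; split_ifs <;> omega⟩

/-- The Lee weight on Z4. -/
def leeWt (a : ZMod 4) : ℕ :=
  if a = 0 then 0 else if a = 2 then 2 else 1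

/-- The binary part of the syndrome ℋ·wᵀ, coming from the rows
[T_bᵀ, I_{α−κ} | 0, 2S_bᵀ] of ℋ. -/
def syndB (w : Vab (κ + a2) (b1 + δ)) : Fin a2 → ZMod 2 := fun i =>
  (∑ j, Tb j i * w.1 (Fin.castAdd a2 j)) + w.1 (Fin.natAdd κ i)
    + ∑ l, Sb l i * toZ2 (w.2 (Fin.natAdd b1 l))

/-- The quaternary part of the syndrome ℋ·wᵀ, coming from the rows
[T_2ᵀ, 0 | I_{β+κ−γ−δ}, −S_qᵀ] of ℋ. -/
def syndQ (w : Vab (κ + a2) (b1 + δ)) : Fin b1 → ZMod 4 := fun i =>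
  (∑ j, T2 j i * (2 * toZ4 (w.1 (Fin.castAdd a2 j)))) + w.2 (Fin.castAdd δ i)
    - ∑ l, Sq l i * w.2 (Fin.natAdd b1 l)

lemma hammingDist_comp_equiv {ι ι' β : Type*} [Fintype ι] [Fintype ι'] [DecidableEq β]
    (σ : ι' ≃ ι) (x y : ι → β) : hammingDist (x ∘ σ) (y ∘ σ) = hammingDist x y := by
  simp only [hammingDist, Finset.card_filter]
  exact Fintype.sum_equiv σ _ _ fun _ => rfl

lemma hammingDist_fin_add {m n : ℕ} {β : Type*} [DecidableEq β] (x y : Fin (m + n) → β) :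
    hammingDist x y = hammingDist (x ∘ Fin.castAdd n) (y ∘ Fin.castAdd n)
      + hammingDist (x ∘ Fin.natAdd m) (y ∘ Fin.natAdd m) := by
  simp only [hammingDist, Finset.card_filter]
  exact Fin.sum_univ_add _

lemma hammingDist_prod {ι ι' β : Type*} [Fintype ι] [Fintype ι'] [DecidableEq β]
    (x y : ι × ι' → β) :
    hammingDist x y = ∑ i, hammingDist (fun j => x (i, j)) (fun j => y (i, j)) := by
  simp only [hammingDist, Finset.card_filter]
  exact Fintype.sum_prod_type _

lemma eq_of_hammingDist_le {ι β : Type*} [Fintype ι] [DecidableEq β]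
    {C : Set (ι → β)} {t : ℕ}
    (hdist : ∀ c₁ ∈ C, ∀ c₂ ∈ C, c₁ ≠ c₂ → 2 * t < hammingDist c₁ c₂)
    {y c₁ c₂ : ι → β} (h₁ : c₁ ∈ C) (h₂ : c₂ ∈ C)
    (hy₁ : hammingDist y c₁ ≤ t) (hy₂ : hammingDist y c₂ ≤ t) : c₁ = c₂ := by
  by_contra hne
  have := hammingDist_triangle_left c₁ c₂ y
  have := hdist c₁ h₁ c₂ h₂ hne
  omega

def grayBits (a : ZMod 4) : Fin 2 → ZMod 2 := ![(gray a).1, (gray a).2]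

lemma grayBits_injective : Function.Injective grayBits := by decide

lemma leeWt_sub (a b : ZMod 4) : leeWt (a - b) = hammingDist (grayBits a) (grayBits b) := by
  revert a b; decide

-- `grayPos n (q, r) = 2 * q + r`: the Gray image of coordinate `q` sits at `2 * q`, `2 * q + 1`.
def grayPos (n : ℕ) : Fin n × Fin 2 ≃ Fin (2 * n) :=
  finProdFinEquiv.trans (finCongr (Nat.mul_comm n 2))

lemma Phi_castAdd {n1 n2 : ℕ} (u : Vab n1 n2) (i : Fin n1) :
    Phi n1 n2 u (Fin.castAdd (2 * n2) i) = u.1 i := by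
  simp [Phi]

lemma Phi_natAdd_grayPos {n1 n2 : ℕ} (u : Vab n1 n2) (q : Fin n2) (r : Fin 2) :
    Phi n1 n2 u (Fin.natAdd n1 (grayPos n2 (q, r))) = grayBits (u.2 q) r := by
  have hdiv : ((r : ℕ) + 2 * q) / 2 = q := by omega
  fin_cases r <;> simp [Phi, grayPos, grayBits, hdiv]

theorem hammingDist_Phi {n1 n2 : ℕ} (u v : Vab n1 n2) :
    hammingDist (Phi n1 n2 u) (Phi n1 n2 v) =
      hammingDist u.1 v.1 + ∑ q, leeWt (u.2 q - v.2 q) := by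
  rw [hammingDist_fin_add, ← hammingDist_comp_equiv (grayPos n2), hammingDist_prod]
  congr 1
  · congr 1 <;> exact funext (Phi_castAdd _)
  · refine Finset.sum_congr rfl fun q _ => ?_
    simp only [Function.comp_apply, Phi_natAdd_grayPos, leeWt_sub]

def info (w : Vab (κ + a2) (b1 + δ)) : (Fin κ → ZMod 2) × (Fin δ → ZMod 4) :=
  (w.1 ∘ Fin.castAdd a2, w.2 ∘ Fin.natAdd b1)

lemma info_encodeFree (u : Fin κ → ZMod 2) (v : Fin δ → ZMod 4) :
    info κ a2 b1 δ (encodeFree κ a2 b1 δ Tb Sb T2 Sq u v) = (u, v) := by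
  ext <;> simp [info, encodeFree]

lemma Ifree_castAdd (j : Fin κ) :
    Ifree κ a2 b1 δ (Fin.castAdd (2 * δ) j) =
      Fin.castAdd (2 * (b1 + δ)) (Fin.castAdd a2 j) := by
  ext; simp [Ifree]

lemma Ifree_natAdd_grayPos (l : Fin δ) (r : Fin 2) :
    Ifree κ a2 b1 δ (Fin.natAdd κ (grayPos δ (l, r))) =
      Fin.natAdd (κ + a2) (grayPos (b1 + δ) (Fin.natAdd b1 l, r)) := by
  ext; simp [Ifree, grayPos]; omega

theorem Phi_comp_Ifree_eq_iff (w w' : Vab (κ + a2) (b1 + δ)) :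
    Phi _ _ w ∘ Ifree κ a2 b1 δ = Phi _ _ w' ∘ Ifree κ a2 b1 δ ↔
      info κ a2 b1 δ w = info κ a2 b1 δ w' := by
  simp only [funext_iff, Fin.forall_fin_add, ← (grayPos δ).forall_congr_right, Prod.forall,
    Function.comp_apply, Ifree_castAdd, Ifree_natAdd_grayPos, Phi_castAdd, Phi_natAdd_grayPos,
    info, Prod.ext_iff]
  simp only [← funext_iff, grayBits_injective.eq_iff]

def reencode (w : Vab (κ + a2) (b1 + δ)) : Vab (κ + a2) (b1 + δ) :=
  encodeFree κ a2 b1 δ Tb Sb T2 Sq (info κ a2 b1 δ w).1 (info κ a2 b1 δ w).2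

lemma syndB_eq_sub (w : Vab (κ + a2) (b1 + δ)) (i : Fin a2) :
    syndB κ a2 b1 δ Tb Sb w i =
      w.1 (Fin.natAdd κ i) - (reencode κ a2 b1 δ Tb Sb T2 Sq w).1 (Fin.natAdd κ i) := by
  simp only [syndB, reencode, encodeFree, info, Fin.append_right, Function.comp_apply,
    CharTwo.sub_eq_add, mul_comm (Tb _ i), mul_comm (Sb _ i)]
  ring

lemma syndQ_eq_sub (w : Vab (κ + a2) (b1 + δ)) (i : Fin b1) :
    syndQ κ a2 b1 δ T2 Sq w i =
      w.2 (Fin.castAdd δ i) - (reencode κ a2 b1 δ Tb Sb T2 Sq w).2 (Fin.castAdd δ i) := by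
  have mul_two_mul_eq_neg : ∀ c s : ZMod 4, c * (2 * s) = -(2 * s * c) := by decide
  simp only [syndQ, reencode, encodeFree, info, Fin.append_left, Function.comp_apply,
    mul_two_mul_eq_neg, Finset.sum_neg_distrib, mul_comm (Sq _ i)]
  ring

lemma info_reencode (w : Vab (κ + a2) (b1 + δ)) :
    info κ a2 b1 δ (reencode κ a2 b1 δ Tb Sb T2 Sq w) = info κ a2 b1 δ w :=
  info_encodeFree κ a2 b1 δ Tb Sb T2 Sq _ _

theorem syndrome_weight_eq_hammingDist (w : Vab (κ + a2) (b1 + δ)) :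
    hammingNorm (syndB κ a2 b1 δ Tb Sb w) + ∑ i, leeWt (syndQ κ a2 b1 δ T2 Sq w i) =
      hammingDist (Phi _ _ w) (Phi _ _ (reencode κ a2 b1 δ Tb Sb T2 Sq w)) := by
  have hbin : (reencode κ a2 b1 δ Tb Sb T2 Sq w).1 ∘ Fin.castAdd a2 = w.1 ∘ Fin.castAdd a2 :=
    congrArg Prod.fst (info_reencode κ a2 b1 δ Tb Sb T2 Sq w)
  have hquat :
      ∀ l, (reencode κ a2 b1 δ Tb Sb T2 Sq w).2 (Fin.natAdd b1 l) = w.2 (Fin.natAdd b1 l) :=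
    congrFun (congrArg Prod.snd (info_reencode κ a2 b1 δ Tb Sb T2 Sq w))
  have hB : hammingNorm (syndB κ a2 b1 δ Tb Sb w) = hammingDist (w.1 ∘ Fin.natAdd κ)
      ((reencode κ a2 b1 δ Tb Sb T2 Sq w).1 ∘ Fin.natAdd κ) := by
    simp only [hammingNorm, hammingDist, syndB_eq_sub κ a2 b1 δ Tb Sb T2 Sq, sub_ne_zero,
      Function.comp_apply]
  have leeWt_zero : leeWt 0 = 0 := rfl
  rw [hammingDist_Phi, hammingDist_fin_add, hbin, hammingDist_self, zero_add, ← hB,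
    Fin.sum_univ_add]
  simp only [syndQ_eq_sub κ a2 b1 δ Tb Sb T2 Sq, hquat, sub_self, leeWt_zero,
    Finset.sum_const_zero, add_zero]

/-- Let 𝒞 be a t-error-correcting Z2Z4-additive code of type (α,β;γ,δ;κ) with
γ = κ, parity check matrix ℋ = [[T_bᵀ, I_{α−κ}, 0, 2S_bᵀ],[T_2ᵀ, 0, I, −S_qᵀ]],
and C = Φ(𝒞) with standard information set J.  If y = x + e with x ∈ C and
wt(e) ≤ t, then the Lee weight of the syndrome ℋ·Φ⁻¹(y)ᵀ is at most t if and
only if wt(e_J) = 0. -/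
theorem syndrome_lee_weight_iff (t : ℕ)
    (C : Set (Fin ((κ + a2) + 2 * (b1 + δ)) → ZMod 2))
    (hC : C = {v | ∃ u z, v = Phi _ _ (encodeFree κ a2 b1 δ Tb Sb T2 Sq u z)})
    (hdist : ∀ c₁ ∈ C, ∀ c₂ ∈ C, c₁ ≠ c₂ → 2 * t < hammingDist c₁ c₂)
    (x e y : Fin ((κ + a2) + 2 * (b1 + δ)) → ZMod 2)
    (hx : x ∈ C) (he : hammingNorm e ≤ t) (hy : y = x + e)
    (w : Vab (κ + a2) (b1 + δ)) (hw : Phi _ _ w = y) :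
    hammingNorm (syndB κ a2 b1 δ Tb Sb w) + ∑ i, leeWt (syndQ κ a2 b1 δ T2 Sq w i) ≤ t ↔
      ∀ m : Fin (κ + 2 * δ), e (Ifree κ a2 b1 δ m) = 0 := by
  subst hy hC
  obtain ⟨u, z, rfl⟩ := hx
  have hdist_x :
      hammingDist (Phi _ _ w) (Phi _ _ (encodeFree κ a2 b1 δ Tb Sb T2 Sq u z)) ≤ t := by
    rwa [hw, hammingDist_comm, hammingDist_eq_hammingNorm, neg_add_cancel_left]
  have he_info : (∀ m, e (Ifree κ a2 b1 δ m) = 0) ↔ info κ a2 b1 δ w = (u, z) := by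
    rw [← info_encodeFree κ a2 b1 δ Tb Sb T2 Sq u z, ← Phi_comp_Ifree_eq_iff, hw]
    simp only [funext_iff, Function.comp_apply, Pi.add_apply, add_eq_left]
  rw [syndrome_weight_eq_hammingDist, he_info]
  constructor
  · intro hsyn
    have hx_eq := eq_of_hammingDist_le hdist ⟨u, z, rfl⟩ ⟨_, _, rfl⟩ hdist_x hsyn
    rw [← info_encodeFree κ a2 b1 δ Tb Sb T2 Sq u z, ← Phi_comp_Ifree_eq_iff, hx_eq,
      Phi_comp_Ifree_eq_iff]
    exact (info_reencode κ a2 b1 δ Tb Sb T2 Sq w).symm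
  · intro h
    rwa [reencode, h]

end
end
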